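/- arXiv:0806.2605 — 2 statements merged into one kernel-verified Lean document; each statement's English description precedes it below -/
import Mathlib

section
/- Let θ, α, ρ be vectors in a rational inner-product-like space with a symmetric bilinear form, with (α,α) = 0, 2(θ,α) = (θ,θ) ≠ 0, and (ρ,α) ≠ 0. Suppose for each positive integer N, r_N = (N²(θ,θ) + 2N(ρ,θ))/(N(θ,θ) + 2(ρ,α)) = N + 2((ρ,θ) − (ρ,α))/((θ,θ) + 2(ρ,α)/N). If (ρ,θ) ≠ (ρ,α), then r_N is not an integer for all sufficiently large N. -/
/-!
With t = (θ,θ), p = (ρ,θ) and a = (ρ,α), one has r_N − N = 2(p − a)/(t + 2a/N) for large N.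
This tends to c = 2(p − a)/t but never equals it, because a ≠ 0 and p ≠ a. Since ℤ is a closed
discrete subset of ℚ, some punctured neighbourhood of c contains no integer, so r_N − N, and
with it r_N, is eventually not an integer.
-/

open Filter Topology Set

theorem Rat.eventually_nhdsNE_notMem_range_intCast (c : ℚ) :
    ∀ᶠ x in 𝓝[≠] c, x ∉ range ((↑) : ℤ → ℚ) :=
  disjoint_principal_right.mp <| isClosed_and_discrete_iff.mp
    ⟨Int.isClosedEmbedding_coe_rat.isClosed_range,
      Int.isClosedEmbedding_coe_rat.isEmbedding.isDiscrete_range⟩ c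

section

variable {𝕜 : Type*} [Field 𝕜] {t p a : 𝕜}

theorem quadratic_div_linear_sub_natCast_eq {N : 𝕜} (hN : N ≠ 0) (hD : t + 2 * a / N ≠ 0) :
    (N ^ 2 * t + 2 * N * p) / (N * t + 2 * a) - N = 2 * (p - a) / (t + 2 * a / N) := by
  have hD' : N * t + 2 * a ≠ 0 := by
    rw [show N * t + 2 * a = N * (t + 2 * a / N) by field_simp]
    exact mul_ne_zero hN hD
  field_simp
  ring

variable [TopologicalSpace 𝕜] [IsTopologicalDivisionRing 𝕜] [T1Space 𝕜] [CharZero 𝕜]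
  [ContinuousSMul ℚ≥0 𝕜]

theorem tendsto_quadratic_div_linear_sub_natCast (ht : t ≠ 0) (ha : a ≠ 0) (hpa : p ≠ a) :
    Tendsto (fun N : ℕ ↦ (N ^ 2 * t + 2 * N * p) / (N * t + 2 * a) - N) atTop
      (𝓝[≠] (2 * (p - a) / t)) := by
  have hden : Tendsto (fun N : ℕ ↦ t + 2 * a / N) atTop (𝓝 t) := by
    simpa using tendsto_const_nhds.add (tendsto_const_div_atTop_nhds_zero_nat (2 * a))
  have hnonzero : ∀ᶠ N : ℕ in atTop, (N : 𝕜) ≠ 0 ∧ t + 2 * a / N ≠ 0 :=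
    ((eventually_ne_atTop 0).mono fun N hN ↦ Nat.cast_ne_zero.mpr hN).and (hden.eventually_ne ht)
  refine tendsto_nhdsWithin_of_tendsto_nhds_of_eventually_within _
    ((tendsto_const_nhds.div hden ht).congr' ?_) ?_
  · filter_upwards [hnonzero] with N ⟨hN, hD⟩
    exact (quadratic_div_linear_sub_natCast_eq hN hD).symm
  · filter_upwards [hnonzero] with N ⟨hN, hD⟩
    rw [quadratic_div_linear_sub_natCast_eq hN hD, mem_compl_singleton_iff, Ne,
      div_eq_div_iff hD ht, mul_right_inj' (mul_ne_zero two_ne_zero (sub_ne_zero.mpr hpa))]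
    simp [hN, ha]

end

theorem stmt_4_general (V : Type*) [AddCommGroup V] [Module ℚ V]
    (B : V →ₗ[ℚ] V →ₗ[ℚ] ℚ) (θ α ρ : V) (hθθ : B θ θ ≠ 0) (hρα : B ρ α ≠ 0)
    (hne : B ρ θ ≠ B ρ α) :
    ∃ N₀ : ℕ, ∀ N : ℕ, N₀ ≤ N →
      ¬ ∃ m : ℤ,
        ((N : ℚ)^2 * (B θ θ) + 2 * (N : ℚ) * (B ρ θ))
          / ((N : ℚ) * (B θ θ) + 2 * (B ρ α)) = (m : ℚ) := by
  obtain ⟨N₀, hN₀⟩ := eventually_atTop.mp <|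
    (tendsto_quadratic_div_linear_sub_natCast hθθ hρα hne).eventually
      (Rat.eventually_nhdsNE_notMem_range_intCast _)
  refine ⟨N₀, fun N hN ⟨m, hm⟩ ↦ ?_⟩
  exact hN₀ N hN ⟨m - N, by push_cast; rw [hm]⟩

/-- Subcase 2: when (α,α) = 0, 2(θ,α) = (θ,θ) ≠ 0, (ρ,α) ≠ 0 and (ρ,θ) ≠ (ρ,α),
the solution r_N = (N²(θ,θ) + 2N(ρ,θ))/(N(θ,θ) + 2(ρ,α)) is not an integer for all
sufficiently large N. -/
theorem stmt_4 (V : Type*) [AddCommGroup V] [Module ℚ V]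
    (B : V →ₗ[ℚ] V →ₗ[ℚ] ℚ) (hsymm : ∀ x y, B x y = B y x)
    (θ α ρ : V) (hαα : B α α = 0) (hθθ : B θ θ ≠ 0)
    (hθα : 2 * (B θ α) = B θ θ) (hρα : B ρ α ≠ 0)
    (hne : B ρ θ ≠ B ρ α) :
    ∃ N₀ : ℕ, ∀ N : ℕ, N₀ ≤ N →
      ¬ ∃ m : ℤ,
        ((N : ℚ)^2 * (B θ θ) + 2 * (N : ℚ) * (B ρ θ))
          / ((N : ℚ) * (B θ θ) + 2 * (B ρ α)) = (m : ℚ) :=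
  stmt_4_general V B θ α ρ hθθ hρα hne
end

section
/- Let V be a ℚ-vector space with symmetric bilinear form, and let θ, α, ρ ∈ V satisfy: (θ,θ) = 0, (ρ,θ) = 2, (α,θ) = 1, (α,ρ) = 2, (α,α) ∈ {0, 2}. Then for integers N ≥ 3 and r > N, the equation 2(ρ, rα − Nθ) = (rα − Nθ, rα − Nθ) has no solution r ∈ ℤ. -/
/-! Expanding the Casimir condition with the given pairings turns it into the quadratic
`c r² - (N + 2) r + 2N = 0` with `c = (α,α)/2 ∈ {0, 1}`. For `c = 0` its root `2N/(N+2)` is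
below `N`; for `c = 1` it factors as `(r - 2)(r - N)`. Neither has a root `r > N ≥ 2`. -/

theorem LinearMap.apply_sub_smul_sub_smul_self {R M : Type*} [CommRing R] [AddCommGroup M]
    [Module R M] (B : M →ₗ[R] M →ₗ[R] R) (hsymm : ∀ x y, B x y = B y x) (a b : R) (x y : M) :
    B (a • x - b • y) (a • x - b • y) = a ^ 2 * B x x - 2 * a * b * B x y + b ^ 2 * B y y := by
  simp only [map_sub, map_smul, LinearMap.sub_apply, LinearMap.smul_apply, smul_eq_mul,
    hsymm y x]
  ring

theorem quadratic_ne_zero_of_lt {K : Type*} [Field K] [LinearOrder K] [IsStrictOrderedRing K]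
    {N r c : K} (hN : 2 ≤ N) (hr : N < r) (hc : c = 0 ∨ c = 1) :
    c * r ^ 2 - (N + 2) * r + 2 * N ≠ 0 := by
  rcases hc with rfl | rfl
  · nlinarith
  · have hfactor : 1 * r ^ 2 - (N + 2) * r + 2 * N = (r - 2) * (r - N) := by ring
    rw [hfactor]
    exact mul_ne_zero (by linarith) (by linarith)

/-- D(n+2|n) obstruction: if (θ,θ) = 0, (ρ,θ) = 2, (α,θ) = 1, (α,ρ) = 2 and
(α,α) ∈ {0,2}, then for N ≥ 3 there is no integer r > N with
2(ρ, rα − Nθ) = (rα − Nθ, rα − Nθ). -/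
theorem stmt_11 (V : Type*) [AddCommGroup V] [Module ℚ V]
    (B : V →ₗ[ℚ] V →ₗ[ℚ] ℚ) (hsymm : ∀ x y, B x y = B y x)
    (θ α ρ : V) (hθθ : B θ θ = 0) (hρθ : B ρ θ = 2)
    (hαθ : B α θ = 1) (hαρ : B α ρ = 2) (hαα : B α α = 0 ∨ B α α = 2) :
    ∀ N : ℤ, 3 ≤ N → ∀ r : ℤ, N < r →
      2 * B ρ ((r : ℚ) • α - (N : ℚ) • θ)
        ≠ B ((r : ℚ) • α - (N : ℚ) • θ) ((r : ℚ) • α - (N : ℚ) • θ) := by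
  intro N hN r hr hcasimir
  have hlhs : 2 * B ρ ((r : ℚ) • α - (N : ℚ) • θ) = 4 * r - 4 * N := by
    simp only [map_sub, map_smul, smul_eq_mul, hsymm ρ α, hαρ, hρθ]
    ring
  rw [hlhs, B.apply_sub_smul_sub_smul_self hsymm, hθθ, hαθ] at hcasimir
  have hNq : (2 : ℚ) ≤ N := by exact_mod_cast hN.trans' (by norm_num)
  have hrq : (N : ℚ) < r := by exact_mod_cast hr
  have hc : B α α / 2 = 0 ∨ B α α / 2 = 1 := by rcases hαα with h | h <;> simp [h]
  exact quadratic_ne_zero_of_lt hNq hrq hc (by linear_combination -hcasimir / 2)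
end
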